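/- The image π(ℋ(q)) of ℋ(q) in the Calkin algebra on H is isomorphic as a unital ℂ-algebra to the algebra ℂ[x, x⁻¹] of complex Laurent polynomials in one indeterminate, via an isomorphism sending π(B) to x; in particular, the integral powers π(B)^n for n ∈ ℤ (where π(B)^{−1} = (1 − q)π(A)) are linearly independent over ℂ and span π(ℋ(q)). -/

import Mathlib

/-!
Both defects `1 - (1 - q) B A` and `1 - (1 - q) A B` are diagonal in the basis `Φ n`, with
summable eigenvalues `q ^ n` and `q ^ (n + 1)`, hence compact. So `π B` is a unit with inverse
`(1 - q) π A`, and evaluating Laurent polynomials at it maps `ℂ[x, x⁻¹]` onto `π(ℋ(q))`.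
Evaluation is injective because `π B` is transcendental: the coordinate of `p(B) Φ n` at
`n + j` is `p_j` times a product of weights `≥ 1`, while a compact operator maps `Φ n` to vectors
whose coordinates at `n + j` tend to `0`. Multiplying by a power of `x` reduces a Laurent
polynomial to a polynomial.
-/

noncomputable section

abbrev H2 : Type := lp (fun _ : ℕ => ℂ) 2

def Phi (n : ℕ) : H2 := lp.single 2 n 1

open Filter Topology Polynomial LaurentPolynomial

section LaurentEval

variable (R : Type*) {A : Type*} [CommRing R] [Ring A] [Algebra R A] (u : Aˣ)

def laurentEval : R[T;T⁻¹] →ₐ[R] A :=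
  AddMonoidAlgebra.lift R A ℤ ((Units.coeHom A).comp (zpowersHom Aˣ u))

variable {R}

lemma laurentEval_T (n : ℤ) : laurentEval R u (T n) = ↑(u ^ n) := by
  rw [laurentEval, T, AddMonoidAlgebra.lift_single, one_smul]
  rfl

lemma laurentEval_toLaurent (p : R[X]) : laurentEval R u (toLaurent p) = aeval (u : A) p := by
  rw [← toLaurentAlg_apply, ← AlgHom.comp_apply]
  congr 1
  refine Polynomial.algHom_ext ?_
  simp [laurentEval_T]

lemma laurentEval_range_le {S : Subalgebra R A} (hu : (u : A) ∈ S) (hu' : ↑u⁻¹ ∈ S) :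
    (laurentEval R u).range ≤ S := by
  rintro _ ⟨f, rfl⟩
  change laurentEval R u f ∈ S
  induction f using LaurentPolynomial.induction_on' with
  | add f g hf hg => rw [map_add]; exact add_mem hf hg
  | C_mul_T n a =>
    rw [LaurentPolynomial.C_eq_algebraMap, map_mul, AlgHom.commutes, laurentEval_T,
      ← Algebra.smul_def]
    refine Subalgebra.smul_mem _ ?_ a
    cases n with
    | ofNat k => simpa using pow_mem hu k
    | negSucc k => simpa [zpow_negSucc] using pow_mem hu' (k + 1)

lemma laurentEval_injective (hu : Transcendental R (u : A)) :
    Function.Injective (laurentEval R u) := by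
  refine (injective_iff_map_eq_zero _).2 fun f hf => ?_
  obtain ⟨n, p, hp⟩ := exists_T_pow f
  have : p = 0 := transcendental_iff.1 hu p <| by
    rw [← laurentEval_toLaurent, hp, map_mul, hf, zero_mul]
  rwa [this, map_zero, eq_comm, (isUnit_T _).mul_left_eq_zero] at hp

lemma exists_algEquiv_laurentPolynomial {S : Subalgebra R A} (hu : Transcendental R (u : A))
    (hS : (laurentEval R u).range = S) :
    ∃ φ : S ≃ₐ[R] R[T;T⁻¹], ∀ y : S, (y : A) = u → φ y = T 1 := by
  refine ⟨((AlgEquiv.ofInjective _ (laurentEval_injective u hu)).trans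
    (Subalgebra.equivOfEq _ _ hS)).symm, fun y hy => ?_⟩
  rw [AlgEquiv.symm_apply_eq]
  ext
  simp [laurentEval_T, hy]

end LaurentEval

open scoped ENNReal in
lemma lp.tendsto_norm_apply_cofinite {α : Type*} {E : α → Type*} [∀ i, NormedAddCommGroup (E i)]
    {p : ℝ≥0∞} (hp : 0 < p.toReal) (f : lp E p) :
    Tendsto (fun i => ‖f i‖) cofinite (𝓝 0) := by
  have h := ((lp.memℓp f).summable hp).tendsto_cofinite_zero.rpow_const
    (p := p.toReal⁻¹) (Or.inr (inv_nonneg.2 hp.le))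
  rw [Real.zero_rpow (inv_ne_zero hp.ne')] at h
  refine h.congr fun i => ?_
  rw [← Real.rpow_mul (norm_nonneg _), mul_inv_cancel₀ hp.ne', Real.rpow_one]

open scoped ENNReal in
lemma lp.eventually_forall_norm_apply_lt {α : Type*} {E : α → Type*}
    [∀ i, NormedAddCommGroup (E i)] {p : ℝ≥0∞} [Fact (1 ≤ p)] (hp : 0 < p.toReal)
    {s : Set (lp E p)} (hs : TotallyBounded s) {ε : ℝ} (hε : 0 < ε) :
    ∀ᶠ i in cofinite, ∀ x ∈ s, ‖x i‖ < ε := by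
  obtain ⟨t, ht, hst⟩ := Metric.totallyBounded_iff.1 hs (ε / 2) (half_pos hε)
  have hsmall : ∀ᶠ i in cofinite, ∀ y ∈ t, ‖(y : lp E p) i‖ < ε / 2 :=
    ht.eventually_all.2 fun y _ =>
      (lp.tendsto_norm_apply_cofinite hp y).eventually_lt_const (half_pos hε)
  filter_upwards [hsmall] with i hi x hx
  obtain ⟨y, hy, hxy⟩ := Set.mem_iUnion₂.1 (hst hx)
  have hdist : ‖x i - y i‖ < ε / 2 := by
    calc ‖x i - y i‖ = ‖(x - y) i‖ := rfl
      _ ≤ ‖x - y‖ := lp.norm_apply_le_norm (zero_lt_one.trans_le Fact.out).ne' _ i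
      _ < ε / 2 := by rwa [← dist_eq_norm]
  calc ‖x i‖ ≤ ‖x i - y i‖ + ‖y i‖ := norm_le_norm_sub_add _ _
    _ < ε / 2 + ε / 2 := add_lt_add hdist (hi y hy)
    _ = ε := add_halves ε

lemma Phi_apply (n i : ℕ) : Phi n i = if i = n then 1 else 0 := by
  simp [Phi, lp.single_apply, Pi.single_apply]

lemma norm_Phi (n : ℕ) : ‖Phi n‖ = 1 := by
  simp [Phi, lp.norm_single]

lemma ext_Phi {S T : H2 →L[ℂ] H2} (h : ∀ n, S (Phi n) = T (Phi n)) : S = T :=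
  lp.ext_continuousLinearMap ENNReal.ofNat_ne_top fun n => ContinuousLinearMap.ext_ring (h n)

lemma IsCompactOperator.tendsto_apply_Phi_add {T : H2 →L[ℂ] H2} (hT : IsCompactOperator T)
    (j : ℕ) : Tendsto (fun n => T (Phi n) (n + j)) atTop (𝓝 0) := by
  obtain ⟨K, hK, hTK⟩ := hT.image_closedBall_subset_compact 1
  refine Metric.tendsto_nhds.2 fun ε hε => ?_
  have hsmall := lp.eventually_forall_norm_apply_lt (by norm_num) hK.totallyBounded hε
  rw [Nat.cofinite_eq_atTop] at hsmall
  filter_upwards [(tendsto_add_atTop_nat j).eventually hsmall] with n hn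
  rw [dist_zero_right]
  exact hn _ (hTK ⟨Phi n, by simp [norm_Phi], rfl⟩)

def basisProj (n : ℕ) : H2 →L[ℂ] H2 :=
  (ContinuousLinearMap.toSpanSingleton ℂ (Phi n)).comp (lp.evalCLM ℂ _ 2 n)

lemma basisProj_apply (n : ℕ) (f : H2) : basisProj n f = f n • Phi n := rfl

lemma norm_basisProj_le (n : ℕ) : ‖basisProj n‖ ≤ 1 :=
  ContinuousLinearMap.opNorm_le_bound _ zero_le_one fun f => by
    rw [basisProj_apply, norm_smul, norm_Phi, mul_one, one_mul]
    exact lp.norm_apply_le_norm (by norm_num) f n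

lemma isCompactOperator_of_apply_Phi {T : H2 →L[ℂ] H2} {c : ℕ → ℂ}
    (hc : Summable fun n => ‖c n‖) (hT : ∀ n, T (Phi n) = c n • Phi n) : IsCompactOperator T := by
  have hsum : Summable fun n => c n • basisProj n :=
    hc.of_norm_bounded fun n => (norm_smul_le _ _).trans <|
      mul_le_of_le_one_right (norm_nonneg _) (norm_basisProj_le n)
  have hdiag : T = ∑' n, c n • basisProj n := ext_Phi fun m => by
    have hterm : ∀ n ≠ m, (c n • basisProj n) (Phi m) = 0 := fun n hn => by
      simp [basisProj_apply, Phi_apply, hn]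
    have h := (hasSum_single m hterm).unique
      (hsum.hasSum.mapL (ContinuousLinearMap.apply ℂ H2 (Phi m)))
    simpa [hT, basisProj_apply, Phi_apply] using h
  rw [hdiag]
  have hclosed : IsClosed (compactOperator (RingHom.id ℂ) H2 H2 : Set (H2 →L[ℂ] H2)) :=
    isClosed_setOfPred_isCompactOperator
  have hproj (n : ℕ) : IsCompactOperator (basisProj n) :=
    (isCompactOperator_of_locallyCompactSpace_dom (lp.evalCLM ℂ (fun _ : ℕ => ℂ) 2 n)).clm_comp
      (ContinuousLinearMap.toSpanSingleton ℂ (Phi n))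
  exact tsum_mem hclosed fun n => (hproj n).smul (c n)

section WeightedShift

variable {S : H2 →L[ℂ] H2} {w : ℕ → ℂ} (hS : ∀ n, S (Phi n) = w n • Phi (n + 1))
include hS

lemma pow_apply_Phi_of_shift (k n : ℕ) :
    (S ^ k) (Phi n) = (∏ i ∈ Finset.range k, w (n + i)) • Phi (n + k) := by
  induction k generalizing n with
  | zero => simp
  | succ k ih =>
    rw [pow_succ, mul_apply_eq_comp, hS, map_smul, ih, smul_smul,
      Finset.prod_range_succ', add_zero, mul_comm]
    simp only [add_assoc, add_comm 1]

lemma aeval_shift_apply_Phi_apply (p : ℂ[X]) (n j : ℕ) :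
    aeval S p (Phi n) (n + j) = p.coeff j * ∏ i ∈ Finset.range j, w (n + i) := by
  induction p using Polynomial.induction_on' with
  | add p r hp hr => simp [hp, hr, add_mul]
  | monomial k a =>
    rw [aeval_monomial, ← Algebra.smul_def, smul_apply,
      pow_apply_Phi_of_shift hS, coeff_monomial]
    by_cases hk : k = j
    · subst hk; simp [Phi_apply]
    · simp [Phi_apply, hk, Ne.symm hk]

lemma eq_zero_of_isCompactOperator_aeval_shift (hw : ∀ n, 1 ≤ ‖w n‖) {p : ℂ[X]}
    (hp : IsCompactOperator (aeval S p)) : p = 0 := by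
  ext j
  have hlim := hp.tendsto_apply_Phi_add j
  simp only [aeval_shift_apply_Phi_apply hS] at hlim
  have hbound : ∀ n, ‖p.coeff j‖ ≤ ‖p.coeff j * ∏ i ∈ Finset.range j, w (n + i)‖ := fun n => by
    rw [norm_mul, norm_prod]
    exact le_mul_of_one_le_right (norm_nonneg _) (Finset.one_le_prod fun i _ => hw _)
  simpa using ge_of_tendsto' hlim.norm hbound

end WeightedShift

section Oscillator

variable {q : ℝ}

-- `(1 - q ^ (n + 1)) / (1 - q)` is the q-integer `[n + 1]_q`.

lemma one_le_norm_sqrt_qInteger (hq0 : 0 ≤ q) (hq1 : q < 1) (n : ℕ) :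
    1 ≤ ‖(√((1 - q ^ (n + 1)) / (1 - q)) : ℂ)‖ := by
  have hq : q ^ (n + 1) ≤ q := pow_le_of_le_one hq0 hq1.le n.succ_ne_zero
  rw [Complex.norm_real, Real.norm_of_nonneg (Real.sqrt_nonneg _), Real.one_le_sqrt,
    one_le_div (by linarith)]
  linarith

lemma one_sub_mul_qInteger_mul_self (hq0 : 0 ≤ q) (hq1 : q < 1) (n : ℕ) :
    ((1 - q : ℝ) : ℂ) * (√((1 - q ^ (n + 1)) / (1 - q)) : ℂ) * (√((1 - q ^ (n + 1)) / (1 - q)))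
      = 1 - (q : ℂ) ^ (n + 1) := by
  have hpow : q ^ (n + 1) ≤ 1 := pow_le_one₀ hq0 hq1.le
  have hq : (1 - q) ≠ 0 := by linarith
  rw [mul_assoc, ← Complex.ofReal_mul, Real.mul_self_sqrt (div_nonneg (by linarith) (by linarith)),
    ← Complex.ofReal_mul, mul_div_cancel₀ _ hq]
  push_cast
  ring

variable {A B : H2 →L[ℂ] H2} (hq0 : 0 < q) (hq1 : q < 1)
  (hB : ∀ n : ℕ, B (Phi n) = (Real.sqrt ((1 - q ^ (n + 1)) / (1 - q)) : ℂ) • Phi (n + 1))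
include hq0 hq1 hB

lemma eq_zero_of_isCompactOperator_aeval_creation {p : ℂ[X]} (hp : IsCompactOperator (aeval B p)) :
    p = 0 :=
  eq_zero_of_isCompactOperator_aeval_shift hB (one_le_norm_sqrt_qInteger hq0.le hq1) hp

variable (hA : ∀ n : ℕ, A (Phi (n + 1)) = (Real.sqrt ((1 - q ^ (n + 1)) / (1 - q)) : ℂ) • Phi n)
include hA

lemma isCompactOperator_one_sub_smul_mul_creation_annihilation (hA0 : A (Phi 0) = 0) :
    IsCompactOperator ⇑(1 - ((1 - q : ℝ) : ℂ) • (B * A)) := by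
  refine isCompactOperator_of_apply_Phi (c := fun n => (q : ℂ) ^ n)
    (by simpa [abs_of_pos hq0] using summable_geometric_of_lt_one hq0.le hq1) fun n => ?_
  cases n with
  | zero => simp [hA0]
  | succ n =>
    rw [sub_apply, smul_apply, mul_apply_eq_comp, hA, map_smul, hB, smul_smul,
      smul_smul, one_sub_mul_qInteger_mul_self hq0.le hq1, one_apply_eq_self, sub_smul,
      one_smul, sub_sub_cancel]

lemma isCompactOperator_one_sub_smul_mul_annihilation_creation :
    IsCompactOperator ⇑(1 - ((1 - q : ℝ) : ℂ) • (A * B)) := by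
  refine isCompactOperator_of_apply_Phi (c := fun n => (q : ℂ) ^ (n + 1))
    (by simpa [abs_of_pos hq0, pow_succ] using
      (summable_geometric_of_lt_one hq0.le hq1).mul_right q) fun n => ?_
  rw [sub_apply, smul_apply, mul_apply_eq_comp, hB, map_smul, hA, smul_smul,
    smul_smul, one_sub_mul_qInteger_mul_self hq0.le hq1, one_apply_eq_self, sub_smul,
    one_smul, sub_sub_cancel]

end Oscillator

theorem stmt_15_general (q : ℝ) (hq0 : 0 < q) (hq1 : q < 1)
    (A B : H2 →L[ℂ] H2)
    (hB : ∀ n : ℕ, B (Phi n) = (Real.sqrt ((1 - q ^ (n + 1)) / (1 - q)) : ℂ) • Phi (n + 1))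
    (hA0 : A (Phi 0) = 0)
    (hA : ∀ n : ℕ, A (Phi (n + 1)) = (Real.sqrt ((1 - q ^ (n + 1)) / (1 - q)) : ℂ) • Phi n)
    (Q : Type) [Ring Q] [Algebra ℂ Q] (π : (H2 →L[ℂ] H2) →ₐ[ℂ] Q)
    (hπker : ∀ T : H2 →L[ℂ] H2, π T = 0 ↔ IsCompactOperator (⇑T)) :
    ∃ φ : ((Algebra.adjoin ℂ ({A, B} : Set (H2 →L[ℂ] H2))).map π) ≃ₐ[ℂ]
        LaurentPolynomial ℂ,
      ∀ y : ((Algebra.adjoin ℂ ({A, B} : Set (H2 →L[ℂ] H2))).map π),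
        (y : Q) = π B → φ y = LaurentPolynomial.T 1 := by
  set c : ℂ := ((1 - q : ℝ) : ℂ)
  have hcalkin (S T : H2 →L[ℂ] H2) (h : IsCompactOperator ⇑(S - T)) : π S = π T :=
    sub_eq_zero.1 (by rw [← map_sub]; exact (hπker _).2 h)
  have hBA : π B * (c • π A) = 1 := by
    simpa [c, mul_smul_comm] using (hcalkin _ _
      (isCompactOperator_one_sub_smul_mul_creation_annihilation hq0 hq1 hB hA hA0)).symm
  have hAB : c • π A * π B = 1 := by
    simpa [c, smul_mul_assoc] using (hcalkin _ _
      (isCompactOperator_one_sub_smul_mul_annihilation_creation hq0 hq1 hB hA)).symm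
  let u : Qˣ := ⟨π B, c • π A, hBA, hAB⟩
  have hu : Transcendental ℂ (u : Q) := transcendental_iff.2 fun p hp =>
    eq_zero_of_isCompactOperator_aeval_creation hq0 hq1 hB
      ((hπker _).1 (by rwa [← aeval_algHom_apply]))
  set R := (Algebra.adjoin ℂ ({A, B} : Set (H2 →L[ℂ] H2))).map π
  have hAR : π A ∈ R := Subalgebra.mem_map.2 ⟨A, Algebra.subset_adjoin (by simp), rfl⟩
  have hBR : π B ∈ R := Subalgebra.mem_map.2 ⟨B, Algebra.subset_adjoin (by simp), rfl⟩
  refine exists_algEquiv_laurentPolynomial u hu <|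
    le_antisymm (laurentEval_range_le u hBR (R.smul_mem hAR c)) ?_
  rw [show R = _ from AlgHom.map_adjoin _ _, Algebra.adjoin_le_iff]
  rintro _ ⟨T, rfl | hT, rfl⟩
  · refine ⟨c⁻¹ • LaurentPolynomial.T (-1), ?_⟩
    have hc : c ≠ 0 := Complex.ofReal_ne_zero.2 (sub_ne_zero.2 hq1.ne')
    simp [laurentEval_T, u, smul_smul, inv_mul_cancel₀ hc]
  · exact ⟨LaurentPolynomial.T 1, by simp [laurentEval_T, u, Set.mem_singleton_iff.1 hT]⟩

/-- The image `π(ℋ(q))` of the unital subalgebra `ℋ(q)` generated by `A, B` in the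
Calkin algebra (realized as any unital `ℂ`-algebra quotient of `B(H)` by exactly the
compact operators) is isomorphic as a unital `ℂ`-algebra to the Laurent polynomial
algebra `ℂ[x, x⁻¹]`, via an isomorphism sending `π(B)` to `x`. -/
theorem stmt_15 (q : ℝ) (hq0 : 0 < q) (hq1 : q < 1)
    (A B : H2 →L[ℂ] H2)
    (hB : ∀ n : ℕ, B (Phi n) = (Real.sqrt ((1 - q ^ (n + 1)) / (1 - q)) : ℂ) • Phi (n + 1))
    (hA0 : A (Phi 0) = 0)
    (hA : ∀ n : ℕ, A (Phi (n + 1)) = (Real.sqrt ((1 - q ^ (n + 1)) / (1 - q)) : ℂ) • Phi n)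
    (Q : Type) [Ring Q] [Algebra ℂ Q] (π : (H2 →L[ℂ] H2) →ₐ[ℂ] Q)
    (hπsurj : Function.Surjective π)
    (hπker : ∀ T : H2 →L[ℂ] H2, π T = 0 ↔ IsCompactOperator (⇑T)) :
    ∃ φ : ((Algebra.adjoin ℂ ({A, B} : Set (H2 →L[ℂ] H2))).map π) ≃ₐ[ℂ]
        LaurentPolynomial ℂ,
      ∀ y : ((Algebra.adjoin ℂ ({A, B} : Set (H2 →L[ℂ] H2))).map π),
        (y : Q) = π B → φ y = LaurentPolynomial.T 1 :=
  stmt_15_general q hq0 hq1 A B hB hA0 hA Q π hπker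

end
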